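/- arXiv:2601.20895 — 3 statements merged into one kernel-verified Lean document; each statement's English description precedes it below -/
import Mathlib

section
/- Let W₀, …, W_{L−1} be linear maps with W_l : ℝ^{d_l} → ℝ^{d_{l+1}}, fix x ∈ ℝ^{d₀} and y ∈ ℝ^{d_L}, and let α ∈ ℝ. Define the inference dynamics by h₀⁽ᵗ⁾ = x and h_L⁽ᵗ⁾ = y for all t, with hidden layers initialized by forward initialization h_l⁽⁰⁾ = W_{l−1} ⋯ W₀ x (1 ≤ l ≤ L − 1) and updated by h_l⁽ᵗ⁺¹⁾ = h_l⁽ᵗ⁾ − α[(h_l⁽ᵗ⁾ − W_{l−1} h_{l−1}⁽ᵗ⁾) − W_l^*(h_{l+1}⁽ᵗ⁾ − W_l h_l⁽ᵗ⁾)]. Then for every t ≥ 0 and every l with 1 ≤ l ≤ L − 1 − t, we have h_l⁽ᵗ⁾ = h_l⁽⁰⁾, and in particular the prediction error h_l⁽ᵗ⁾ − W_{l−1} h_{l−1}⁽ᵗ⁾ = 0 for all l ≤ L − 1 − t. -/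
/-- Clamped linear PC inference dynamics with forward initialization:
`h t 0 = x` and `h t L = y` for all `t`, the hidden layers `l = k+1` with
`1 ≤ l ≤ L−1` are initialized to `fwd l = W_{l−1} ⋯ W₀ x` and updated by
gradient descent on the energy. Then for all `t` and all hidden `l = k+1` with
`l + t ≤ L − 1`, the state is unchanged, `h t l = h 0 l`, and in particular the
prediction error `h t l − W_{l−1} (h t (l−1))` vanishes. -/
theorem stmt_9 (L : ℕ) (d : ℕ → ℕ)
    (W : (l : ℕ) → EuclideanSpace ℝ (Fin (d l)) →L[ℝ] EuclideanSpace ℝ (Fin (d (l + 1))))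
    (x : EuclideanSpace ℝ (Fin (d 0))) (y : EuclideanSpace ℝ (Fin (d L))) (α : ℝ)
    (fwd : (l : ℕ) → EuclideanSpace ℝ (Fin (d l)))
    (hfwd0 : fwd 0 = x) (hfwds : ∀ l, fwd (l + 1) = W l (fwd l))
    (h : ℕ → (l : ℕ) → EuclideanSpace ℝ (Fin (d l)))
    (hx : ∀ t, h t 0 = x) (hy : ∀ t, h t L = y)
    (hinit : ∀ k : ℕ, k + 1 ≤ L - 1 → h 0 (k + 1) = fwd (k + 1))
    (hupd : ∀ t (k : ℕ), k + 1 ≤ L - 1 →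
      h (t + 1) (k + 1)
        = h t (k + 1) - α • ((h t (k + 1) - W k (h t k))
          - ContinuousLinearMap.adjoint (W (k + 1))
              (h t (k + 2) - W (k + 1) (h t (k + 1))))) :
    ∀ t (k : ℕ), k + 1 + t ≤ L - 1 →
      h t (k + 1) = h 0 (k + 1) ∧ h t (k + 1) - W k (h t k) = 0 := by
  have key : ∀ t l, l + t ≤ L - 1 → h t l = fwd l := by
    intro t
    induction t with
    | zero =>
      intro l hl
      cases l with
      | zero => simpa [hfwd0] using hx 0
      | succ k => exact hinit k (by omega)
    | succ t ih =>
      intro l hl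
      cases l with
      | zero => simpa [hfwd0] using hx (t + 1)
      | succ k =>
        have h1 : h t (k + 1) = fwd (k + 1) := ih _ (by omega)
        have h0 : h t k = fwd k := ih _ (by omega)
        have h2 : h t (k + 2) = fwd (k + 2) := ih _ (by omega)
        rw [hupd t k (by omega), h1, h0, h2, hfwds (k + 1), hfwds k]
        simp
  intro t k hk
  have h1 := key t (k + 1) hk
  have h0 := key t k (by omega)
  have h1' := key 0 (k + 1) (by omega)
  rw [h1, h0, h1', hfwds k]
  simp
end

section
/- In the setting of the clamped linear inference dynamics with forward initialization (h₀⁽ᵗ⁾ = x, h_L⁽ᵗ⁾ = y, h_l⁽⁰⁾ = W_{l−1} ⋯ W₀ x, and h_l⁽ᵗ⁺¹⁾ = h_l⁽ᵗ⁾ − α[(h_l⁽ᵗ⁾ − W_{l−1} h_{l−1}⁽ᵗ⁾) − W_l^*(h_{l+1}⁽ᵗ⁾ − W_l h_l⁽ᵗ⁾)]), suppose L ≥ 2 and let T be any number of inference steps with 0 ≤ T ≤ L − 2. Then h₁⁽ᵀ⁾ − W₀ x = 0, so the PC weight update for the first-layer weights, namely the rank-one gradient (h₁⁽ᵀ⁾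 − W₀ h₀⁽ᵀ⁾) ⊗ h₀⁽ᵀ⁾, is identically zero: the weights W₀ receive no update unless T ≥ L − 1. -/
/-- In the clamped linear PC inference dynamics with forward initialization,
if `L ≥ 2` and the number of inference steps satisfies `T ≤ L − 2`, then the
first hidden-layer prediction error vanishes, `h T 1 − W₀ x = 0`, and hence the
rank-one PC weight gradient for `W₀`, namely the map
`v ↦ ⟨h T 0, v⟩ • (h T 1 − W₀ (h T 0))`, is identically zero: `W₀` receives no
update unless `T ≥ L − 1`. -/
theorem stmt_10 (L : ℕ) (hL : 2 ≤ L) (d : ℕ → ℕ)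
    (W : (l : ℕ) → EuclideanSpace ℝ (Fin (d l)) →L[ℝ] EuclideanSpace ℝ (Fin (d (l + 1))))
    (x : EuclideanSpace ℝ (Fin (d 0))) (y : EuclideanSpace ℝ (Fin (d L))) (α : ℝ)
    (fwd : (l : ℕ) → EuclideanSpace ℝ (Fin (d l)))
    (hfwd0 : fwd 0 = x) (hfwds : ∀ l, fwd (l + 1) = W l (fwd l))
    (h : ℕ → (l : ℕ) → EuclideanSpace ℝ (Fin (d l)))
    (hx : ∀ t, h t 0 = x) (hy : ∀ t, h t L = y)
    (hinit : ∀ k : ℕ, k + 1 ≤ L - 1 → h 0 (k + 1) = fwd (k + 1))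
    (hupd : ∀ t (k : ℕ), k + 1 ≤ L - 1 →
      h (t + 1) (k + 1)
        = h t (k + 1) - α • ((h t (k + 1) - W k (h t k))
          - ContinuousLinearMap.adjoint (W (k + 1))
              (h t (k + 2) - W (k + 1) (h t (k + 1)))))
    (T : ℕ) (hT : T ≤ L - 2) :
    h T 1 - W 0 x = 0 ∧
    ∀ v : EuclideanSpace ℝ (Fin (d 0)),
      (inner ℝ (h T 0) v : ℝ) • (h T 1 - W 0 (h T 0)) = 0 := by
  have key : ∀ t k : ℕ, k + 1 + t ≤ L - 1 → h t (k + 1) = fwd (k + 1) := by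
    intro t
    induction t with
    | zero => intro k hk; exact hinit k (by omega)
    | succ t ih =>
      intro k hk
      have hk1 : k + 1 ≤ L - 1 := by omega
      have h1 : h t (k + 1) = fwd (k + 1) := ih k (by omega)
      have h2 : h t (k + 2) = fwd (k + 2) := ih (k + 1) (by omega)
      have h0 : h t k = fwd k := by
        cases k with
        | zero => rw [hx, hfwd0]
        | succ j => exact ih j (by omega)
      rw [hupd t k hk1, h0, h1, h2, ← hfwds k, ← hfwds (k + 1)]
      simp
  have h1 : h T 1 = fwd 1 := key T 0 (by omega)
  have hz : h T 1 - W 0 x = 0 := by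
    rw [h1, ← hfwd0, ← hfwds 0]; simp
  refine ⟨hz, fun v => ?_⟩
  rw [hx, hz]
  simp
end

section
/- Let W₀, …, W_{L−1} be linear maps with W_l : ℝ^{d_l} → ℝ^{d_{l+1}}, fix x ∈ ℝ^{d₀} and y ∈ ℝ^{d_L}, and let h⁽⁰⁾ be the forward-initialized clamped state: h₀⁽⁰⁾ = x, h_l⁽⁰⁾ = W_{l−1} ⋯ W₀ x for 1 ≤ l ≤ L − 1, and h_L⁽⁰⁾ = y. Then the PC weight gradient for the last layer, i.e. the gradient at W_{L−1} of W ↦ (1/2)‖h_L⁽⁰⁾ − W h_{L−1}⁽⁰⁾‖², equals the gradient at W_{L−1} of the backpropagation loss W ↦ (1/2)‖y − W · (W_{L−2} ⋯ W₀ x)‖²; both are the rank-one map −(y − W_{L−1} W_{L−2} ⋯ W₀ x) ⊗ (W_{L−2} ⋯ W₀ x). -/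

lemma key_stmt11 {E F : Type*} [NormedAddCommGroup E] [InnerProductSpace ℝ E]
    [NormedAddCommGroup F] [InnerProductSpace ℝ F] (v : E) (c : F) (W₀ : E →L[ℝ] F) :
    HasFDerivAt (fun Wv : E →L[ℝ] F => (1 / 2 : ℝ) * ‖c - Wv v‖ ^ 2)
      (-(innerSL ℝ (c - W₀ v)).comp (ContinuousLinearMap.apply ℝ F v)) W₀ := by
  have h1 : HasFDerivAt (fun Wv : E →L[ℝ] F => c - Wv v)
      (-(ContinuousLinearMap.apply ℝ F v)) W₀ := by
    have h := (hasFDerivAt_const c W₀).sub ((ContinuousLinearMap.apply ℝ F v).hasFDerivAt)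
    rw [zero_sub] at h
    exact h
  have h2 := h1.norm_sq.const_mul (1 / 2 : ℝ)
  refine h2.congr_fderiv ?_
  ext M
  simp [inner_smul_right]

/-- Let `L = L' + 1` and let `h0` be the forward-initialized clamped state:
`h0 0 = x`, `h0 l = fwd l = W_{l−1} ⋯ W₀ x` for `1 ≤ l ≤ L − 1`, and
`h0 L = y`. Then the PC weight gradient for the last layer, i.e. the derivative
at `W_{L−1}` of `W ↦ (1/2)‖h0 L − W (h0 (L−1))‖²`, equals the derivative at
`W_{L−1}` of the backpropagation loss `W ↦ (1/2)‖y − W (W_{L−2} ⋯ W₀ x)‖²`, and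
both are the rank-one map `−(y − W_{L−1} ⋯ W₀ x) ⊗ (W_{L−2} ⋯ W₀ x)` in the
sense that applied to a direction `M` they give
`−⟨y − W_{L−1} (fwd (L−1)), M (fwd (L−1))⟩`. -/
theorem stmt_11 (L' : ℕ) (d : ℕ → ℕ)
    (W : (l : ℕ) → EuclideanSpace ℝ (Fin (d l)) →L[ℝ] EuclideanSpace ℝ (Fin (d (l + 1))))
    (x : EuclideanSpace ℝ (Fin (d 0))) (y : EuclideanSpace ℝ (Fin (d (L' + 1))))
    (fwd : (l : ℕ) → EuclideanSpace ℝ (Fin (d l)))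
    (hfwd0 : fwd 0 = x) (hfwds : ∀ l, fwd (l + 1) = W l (fwd l))
    (h0 : (l : ℕ) → EuclideanSpace ℝ (Fin (d l)))
    (hx : h0 0 = x) (hy : h0 (L' + 1) = y)
    (hinit : ∀ k : ℕ, k + 1 ≤ L' → h0 (k + 1) = fwd (k + 1)) :
    fderiv ℝ (fun Wv : EuclideanSpace ℝ (Fin (d L')) →L[ℝ] EuclideanSpace ℝ (Fin (d (L' + 1))) =>
        (1 / 2) * ‖h0 (L' + 1) - Wv (h0 L')‖ ^ 2) (W L')
      = fderiv ℝ (fun Wv : EuclideanSpace ℝ (Fin (d L')) →L[ℝ] EuclideanSpace ℝ (Fin (d (L' + 1))) =>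
          (1 / 2) * ‖y - Wv (fwd L')‖ ^ 2) (W L') ∧
    ∀ M : EuclideanSpace ℝ (Fin (d L')) →L[ℝ] EuclideanSpace ℝ (Fin (d (L' + 1))),
      fderiv ℝ (fun Wv : EuclideanSpace ℝ (Fin (d L')) →L[ℝ] EuclideanSpace ℝ (Fin (d (L' + 1))) =>
          (1 / 2) * ‖h0 (L' + 1) - Wv (h0 L')‖ ^ 2) (W L') M
        = -(inner ℝ (y - W L' (fwd L')) (M (fwd L')) : ℝ) := by
  have hL : h0 L' = fwd L' := by
    cases L' with
    | zero => rw [hx, hfwd0]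
    | succ k => exact hinit k le_rfl
  rw [hy, hL]
  refine ⟨rfl, fun M => ?_⟩
  rw [(key_stmt11 (fwd L') y (W L')).fderiv]
  simp
  simp [inner_sub_left]
end
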